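/- arXiv:1501.06032 — 2 statements merged into one kernel-verified Lean document; each statement's English description precedes it below -/
import Mathlib

section
/- Lemma (interpolation preserves LMI feasibility). Fix ρ ∈ Γ and the data A(ρ), B₁, B₂, R, Q̄, N, the matrices C_{ij}, and the index sets S_i^φ, d_i, d̄_i. Suppose the two tuples (Y₁, {ν_{ij}¹}, {μ_{ij}¹}, {ν_{i0}¹}, {μ_{0i}¹}) and (Y₂, {ν_{ij}²}, {μ_{ij}²}, {ν_{i0}²}, {μ_{0i}²}), each consisting of a symmetric positive definite n×n matrix and positive scalars, satisfy Υ_i < 0 for every i = 1,…,N. Then for every γ ∈ [0,1] the interpolated tuple defined by Y_γ = γY₁ + (1−γ)Y₂, ν_{ij,γ} = (γ(ν_{ij}¹)⁻¹ + (1−γ)(ν_{ij}²)⁻¹)⁻¹, μ_{ij,γ} = (γ(μ_{ij}¹)⁻¹ + (1−γ)(μ_{ij}²)⁻¹)⁻¹, ν_{i0,γ} = (γ(ν_{i0}¹)⁻¹ + (1−γ)(ν_{i0}²)⁻¹)⁻¹ (for i with d_i = 1), and μ_{0i,γ} = (γ(μ_{0i}¹)⁻¹ + (1−γ)(μ_{0i}²)⁻¹)⁻¹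 (for i with d̄_i = 1) also satisfies Υ_i < 0 for every i = 1,…,N. -/
open Matrix BigOperators

namespace LFT

variable (n p m N : ℕ)

abbrev inIdx (S : Fin N → Finset (Fin N)) (q : Fin N → Fin N → ℕ) (i : Fin N) : Type :=
  Σ j : {j // j ∈ S i}, Fin (q i j.1)

abbrev outIdx (S : Fin N → Finset (Fin N)) (q : Fin N → Fin N → ℕ) (i : Fin N) : Type :=
  Σ r : {r // i ∈ S r}, Fin (q r.1 i)

def Chat (S : Fin N → Finset (Fin N)) (q : Fin N → Fin N → ℕ)
    (C : ∀ i j : Fin N, Matrix (Fin (q i j)) (Fin n) ℝ) (i : Fin N) :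
    Matrix (inIdx N S q i) (Fin n) ℝ :=
  Matrix.of fun jk b => C i jk.1.1 jk.2 b

def Cbar (S : Fin N → Finset (Fin N)) (q : Fin N → Fin N → ℕ)
    (C : ∀ i j : Fin N, Matrix (Fin (q i j)) (Fin n) ℝ) (i : Fin N) :
    Matrix (outIdx N S q i) (Fin n) ℝ :=
  Matrix.of fun rk b => C rk.1.1 i rk.2 b

noncomputable def Phi (S : Fin N → Finset (Fin N)) (q : Fin N → Fin N → ℕ)
    (ν : Fin N → Fin N → ℝ) (i : Fin N) :
    Matrix (inIdx N S q i) (inIdx N S q i) ℝ :=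
  Matrix.blockDiagonal' fun j : {j // j ∈ S i} =>
    ((ν i j.1)⁻¹ : ℝ) • (1 : Matrix (Fin (q i j.1)) (Fin (q i j.1)) ℝ)

noncomputable def Omega (S : Fin N → Finset (Fin N)) (q : Fin N → Fin N → ℕ)
    (μ : Fin N → Fin N → ℝ) (i : Fin N) :
    Matrix (outIdx N S q i) (outIdx N S q i) ℝ :=
  Matrix.blockDiagonal' fun r : {r // i ∈ S r} =>
    ((μ r.1 i)⁻¹ : ℝ) • (1 : Matrix (Fin (q r.1 i)) (Fin (q r.1 i)) ℝ)

def condMat {k : ℕ} : (b : Bool) → Matrix (Fin k) (Fin n) ℝ →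
    Matrix (Fin (cond b k 0)) (Fin n) ℝ
  | true, M => M
  | false, _ => Matrix.of fun a _ => Fin.elim0 a

/-- `Z_i` (with the `π_i⁻¹β²I` term). -/
noncomputable def Zmat (Aρ Y : Matrix (Fin n) (Fin n) ℝ)
    (B₁ : Matrix (Fin n) (Fin p) ℝ) (B₂ : Matrix (Fin n) (Fin m) ℝ)
    (R : Matrix (Fin p) (Fin p) ℝ) (S : Fin N → Finset (Fin N))
    (ν μ : Fin N → Fin N → ℝ) (πc : Fin N → ℝ) (ν0 μ0 : Fin N → ℝ)
    (d dbar : Fin N → Bool) (β : ℝ) (i : Fin N) : Matrix (Fin n) (Fin n) ℝ :=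
  Aρ * Y + Y * Aρᵀ - B₁ * R⁻¹ * B₁ᵀ
    + ((πc i)⁻¹ * β ^ 2) • (1 : Matrix (Fin n) (Fin n) ℝ)
    + ((∑ j ∈ S i, ((ν i j)⁻¹ + (μ i j)⁻¹)) + (if d i then (ν0 i)⁻¹ else 0)
        + ∑ k ∈ Finset.univ.filter fun k => dbar k, (μ0 k)⁻¹) • (B₂ * B₂ᵀ)

/-- Index of the trailing blocks of `Π_i`. -/
abbrev restIdx (S : Fin N → Finset (Fin N)) (q : Fin N → Fin N → ℕ)
    (qd qu : Fin N → ℕ) (d dbar : Fin N → Bool) (i : Fin N) : Type :=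
  Fin n ⊕ (inIdx N S q i ⊕ (outIdx N S q i ⊕ (Fin n ⊕
    (Fin (cond (d i) (qd i) 0) ⊕ Fin (cond (dbar i) (qu i) 0)))))

/-- The off-diagonal first block row of `Π_i`:
`[Y Q̄^{1/2}, Y Ĉ_i', Y C̄_i', Y, Y C_{i0}', Y C_{0i}']`. -/
noncomputable def Brow (Y Qhalf : Matrix (Fin n) (Fin n) ℝ)
    (S : Fin N → Finset (Fin N)) (q : Fin N → Fin N → ℕ)
    (C : ∀ i j : Fin N, Matrix (Fin (q i j)) (Fin n) ℝ)
    (qd : Fin N → ℕ) (C0 : ∀ i : Fin N, Matrix (Fin (qd i)) (Fin n) ℝ)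
    (qu : Fin N → ℕ) (Cu : ∀ i : Fin N, Matrix (Fin (qu i)) (Fin n) ℝ)
    (d dbar : Fin N → Bool) (i : Fin N) :
    Matrix (Fin n) (restIdx n N S q qd qu d dbar i) ℝ :=
  Matrix.of fun a => Sum.elim ((Y * Qhalf) a)
    (Sum.elim ((Y * (Chat n N S q C i)ᵀ) a)
      (Sum.elim ((Y * (Cbar n N S q C i)ᵀ) a)
        (Sum.elim (Y a)
          (Sum.elim ((Y * (condMat n (d i) (C0 i))ᵀ) a)
            ((Y * (condMat n (dbar i) (Cu i))ᵀ) a)))))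

/-- The trailing diagonal blocks of `Π_i`:
`diag(−I, −Φ_i, −Ω_i, −π_i⁻¹I, −ν_{i0}⁻¹I, −(Nμ_{0i})⁻¹I)`. -/
noncomputable def Dblk (S : Fin N → Finset (Fin N)) (q : Fin N → Fin N → ℕ)
    (qd qu : Fin N → ℕ) (ν μ : Fin N → Fin N → ℝ) (πc : Fin N → ℝ)
    (ν0 μ0 : Fin N → ℝ) (d dbar : Fin N → Bool) (i : Fin N) :
    Matrix (restIdx n N S q qd qu d dbar i) (restIdx n N S q qd qu d dbar i) ℝ :=
  Matrix.fromBlocks (-(1 : Matrix (Fin n) (Fin n) ℝ)) 0 0 <|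
    Matrix.fromBlocks (-(Phi N S q ν i)) 0 0 <|
      Matrix.fromBlocks (-(Omega N S q μ i)) 0 0 <|
        Matrix.fromBlocks (-((πc i)⁻¹ • (1 : Matrix (Fin n) (Fin n) ℝ))) 0 0 <|
          Matrix.fromBlocks
            (-((ν0 i)⁻¹ •
              (1 : Matrix (Fin (cond (d i) (qd i) 0)) (Fin (cond (d i) (qd i) 0)) ℝ))) 0 0
            (-(((N : ℝ) * μ0 i)⁻¹ •
              (1 : Matrix (Fin (cond (dbar i) (qu i) 0)) (Fin (cond (dbar i) (qu i) 0)) ℝ)))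

/-- The matrix `Π_i` of the LMIs (15). -/
noncomputable def PiMat (Aρ Y Qhalf : Matrix (Fin n) (Fin n) ℝ)
    (B₁ : Matrix (Fin n) (Fin p) ℝ) (B₂ : Matrix (Fin n) (Fin m) ℝ)
    (R : Matrix (Fin p) (Fin p) ℝ) (S : Fin N → Finset (Fin N))
    (q : Fin N → Fin N → ℕ) (C : ∀ i j : Fin N, Matrix (Fin (q i j)) (Fin n) ℝ)
    (qd : Fin N → ℕ) (C0 : ∀ i : Fin N, Matrix (Fin (qd i)) (Fin n) ℝ)
    (qu : Fin N → ℕ) (Cu : ∀ i : Fin N, Matrix (Fin (qu i)) (Fin n) ℝ)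
    (ν μ : Fin N → Fin N → ℝ) (πc : Fin N → ℝ) (ν0 μ0 : Fin N → ℝ)
    (d dbar : Fin N → Bool) (β : ℝ) (i : Fin N) :
    Matrix (Fin n ⊕ restIdx n N S q qd qu d dbar i)
      (Fin n ⊕ restIdx n N S q qd qu d dbar i) ℝ :=
  Matrix.fromBlocks (Zmat n p m N Aρ Y B₁ B₂ R S ν μ πc ν0 μ0 d dbar β i)
    (Brow n N Y Qhalf S q C qd C0 qu Cu d dbar i)
    (Brow n N Y Qhalf S q C qd C0 qu Cu d dbar i)ᵀ
    (Dblk n N S q qd qu ν μ πc ν0 μ0 d dbar i)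

/-- Negative definiteness of a real symmetric matrix. -/
def NegDef {ι : Type*} [Fintype ι] (M : Matrix ι ι ℝ) : Prop := (-M).PosDef

/-- `Z_i` for the reduced LMI `Υ_i` (without the `π_i⁻¹β²I` term). -/
noncomputable def ZmatU (Aρ Y : Matrix (Fin n) (Fin n) ℝ)
    (B₁ : Matrix (Fin n) (Fin p) ℝ) (B₂ : Matrix (Fin n) (Fin m) ℝ)
    (R : Matrix (Fin p) (Fin p) ℝ) (S : Fin N → Finset (Fin N))
    (ν μ : Fin N → Fin N → ℝ) (ν0 μ0 : Fin N → ℝ)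
    (d dbar : Fin N → Bool) (i : Fin N) : Matrix (Fin n) (Fin n) ℝ :=
  Aρ * Y + Y * Aρᵀ - B₁ * R⁻¹ * B₁ᵀ
    + ((∑ j ∈ S i, ((ν i j)⁻¹ + (μ i j)⁻¹)) + (if d i then (ν0 i)⁻¹ else 0)
        + ∑ k ∈ Finset.univ.filter fun k => dbar k, (μ0 k)⁻¹) • (B₂ * B₂ᵀ)

/-- Index of the trailing blocks of `Υ_i`. -/
abbrev restIdxU (S : Fin N → Finset (Fin N)) (q : Fin N → Fin N → ℕ)
    (qd qu : Fin N → ℕ) (d dbar : Fin N → Bool) (i : Fin N) : Type :=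
  Fin n ⊕ (inIdx N S q i ⊕ (outIdx N S q i ⊕
    (Fin (cond (d i) (qd i) 0) ⊕ Fin (cond (dbar i) (qu i) 0))))

/-- The off-diagonal first block row of `Υ_i`:
`[Y Q̄^{1/2}, Y Ĉ_i', Y C̄_i', Y C_{i0}', Y C_{0i}']`. -/
noncomputable def BrowU (Y Qhalf : Matrix (Fin n) (Fin n) ℝ)
    (S : Fin N → Finset (Fin N)) (q : Fin N → Fin N → ℕ)
    (C : ∀ i j : Fin N, Matrix (Fin (q i j)) (Fin n) ℝ)
    (qd : Fin N → ℕ) (C0 : ∀ i : Fin N, Matrix (Fin (qd i)) (Fin n) ℝ)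
    (qu : Fin N → ℕ) (Cu : ∀ i : Fin N, Matrix (Fin (qu i)) (Fin n) ℝ)
    (d dbar : Fin N → Bool) (i : Fin N) :
    Matrix (Fin n) (restIdxU n N S q qd qu d dbar i) ℝ :=
  Matrix.of fun a => Sum.elim ((Y * Qhalf) a)
    (Sum.elim ((Y * (Chat n N S q C i)ᵀ) a)
      (Sum.elim ((Y * (Cbar n N S q C i)ᵀ) a)
        (Sum.elim ((Y * (condMat n (d i) (C0 i))ᵀ) a)
          ((Y * (condMat n (dbar i) (Cu i))ᵀ) a))))

/-- The trailing diagonal blocks of `Υ_i`: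
`diag(−I, −Φ_i, −Ω_i, −ν_{i0}⁻¹I, −(Nμ_{0i})⁻¹I)`. -/
noncomputable def DblkU (S : Fin N → Finset (Fin N)) (q : Fin N → Fin N → ℕ)
    (qd qu : Fin N → ℕ) (ν μ : Fin N → Fin N → ℝ)
    (ν0 μ0 : Fin N → ℝ) (d dbar : Fin N → Bool) (i : Fin N) :
    Matrix (restIdxU n N S q qd qu d dbar i) (restIdxU n N S q qd qu d dbar i) ℝ :=
  Matrix.fromBlocks (-(1 : Matrix (Fin n) (Fin n) ℝ)) 0 0 <|
    Matrix.fromBlocks (-(Phi N S q ν i)) 0 0 <|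
      Matrix.fromBlocks (-(Omega N S q μ i)) 0 0 <|
        Matrix.fromBlocks
          (-((ν0 i)⁻¹ •
            (1 : Matrix (Fin (cond (d i) (qd i) 0)) (Fin (cond (d i) (qd i) 0)) ℝ))) 0 0
          (-(((N : ℝ) * μ0 i)⁻¹ •
            (1 : Matrix (Fin (cond (dbar i) (qu i) 0)) (Fin (cond (dbar i) (qu i) 0)) ℝ)))

/-- The matrix `Υ_i` of the reduced coupled LMIs (27). -/
noncomputable def UpsMat (Aρ Y Qhalf : Matrix (Fin n) (Fin n) ℝ)
    (B₁ : Matrix (Fin n) (Fin p) ℝ) (B₂ : Matrix (Fin n) (Fin m) ℝ)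
    (R : Matrix (Fin p) (Fin p) ℝ) (S : Fin N → Finset (Fin N))
    (q : Fin N → Fin N → ℕ) (C : ∀ i j : Fin N, Matrix (Fin (q i j)) (Fin n) ℝ)
    (qd : Fin N → ℕ) (C0 : ∀ i : Fin N, Matrix (Fin (qd i)) (Fin n) ℝ)
    (qu : Fin N → ℕ) (Cu : ∀ i : Fin N, Matrix (Fin (qu i)) (Fin n) ℝ)
    (ν μ : Fin N → Fin N → ℝ) (ν0 μ0 : Fin N → ℝ)
    (d dbar : Fin N → Bool) (i : Fin N) :
    Matrix (Fin n ⊕ restIdxU n N S q qd qu d dbar i)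
      (Fin n ⊕ restIdxU n N S q qd qu d dbar i) ℝ :=
  Matrix.fromBlocks (ZmatU n p m N Aρ Y B₁ B₂ R S ν μ ν0 μ0 d dbar i)
    (BrowU n N Y Qhalf S q C qd C0 qu Cu d dbar i)
    (BrowU n N Y Qhalf S q C qd C0 qu Cu d dbar i)ᵀ
    (DblkU n N S q qd qu ν μ ν0 μ0 d dbar i)

/-!
Every entry of `Υ_i` is affine in `(Y, ν⁻¹, μ⁻¹, ν₀⁻¹, μ₀⁻¹)`: the scalars enter only through
their reciprocals. Harmonic interpolation of the scalars is convex interpolation of their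
reciprocals, so `Υ_i` at the interpolated tuple equals `γ Υ_i¹ + (1 - γ) Υ_i²`, a convex
combination of negative definite matrices.
-/

lemma _root_.Matrix.PosDef.convexComb {ι : Type*} [Fintype ι] {A B : Matrix ι ι ℝ}
    (hA : A.PosDef) (hB : B.PosDef) {γ : ℝ} (h0 : 0 ≤ γ) (h1 : γ ≤ 1) :
    (γ • A + (1 - γ) • B).PosDef := by
  rcases h1.lt_or_eq with h1 | rfl
  · exact .posSemidef_add (hA.posSemidef.smul h0) (hB.smul (sub_pos.2 h1))
  · simpa using hA

lemma NegDef.convexComb {ι : Type*} [Fintype ι] {A B : Matrix ι ι ℝ}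
    (hA : NegDef A) (hB : NegDef B) {γ : ℝ} (h0 : 0 ≤ γ) (h1 : γ ≤ 1) :
    NegDef (γ • A + (1 - γ) • B) := by
  unfold NegDef at *
  simpa only [neg_add, smul_neg] using Matrix.PosDef.convexComb hA hB h0 h1

noncomputable def harmonicInterp (γ a b : ℝ) : ℝ := (γ * a⁻¹ + (1 - γ) * b⁻¹)⁻¹

lemma inv_harmonicInterp (γ a b : ℝ) : (harmonicInterp γ a b)⁻¹ = γ * a⁻¹ + (1 - γ) * b⁻¹ :=
  inv_inv _

lemma zmatU_interp (Aρ Y₁ Y₂ : Matrix (Fin n) (Fin n) ℝ)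
    (B₁ : Matrix (Fin n) (Fin p) ℝ) (B₂ : Matrix (Fin n) (Fin m) ℝ)
    (R : Matrix (Fin p) (Fin p) ℝ) (S : Fin N → Finset (Fin N))
    (ν₁ μ₁ ν₂ μ₂ : Fin N → Fin N → ℝ) (ν0₁ μ0₁ ν0₂ μ0₂ : Fin N → ℝ)
    (d dbar : Fin N → Bool) (γ : ℝ) (i : Fin N) :
    ZmatU n p m N Aρ (γ • Y₁ + (1 - γ) • Y₂) B₁ B₂ R S
        (fun i j => harmonicInterp γ (ν₁ i j) (ν₂ i j))
        (fun i j => harmonicInterp γ (μ₁ i j) (μ₂ i j))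
        (fun i => harmonicInterp γ (ν0₁ i) (ν0₂ i))
        (fun i => harmonicInterp γ (μ0₁ i) (μ0₂ i)) d dbar i
      = γ • ZmatU n p m N Aρ Y₁ B₁ B₂ R S ν₁ μ₁ ν0₁ μ0₁ d dbar i
        + (1 - γ) • ZmatU n p m N Aρ Y₂ B₁ B₂ R S ν₂ μ₂ ν0₂ μ0₂ d dbar i := by
  unfold ZmatU
  split_ifs <;>
    simp only [inv_harmonicInterp, Finset.sum_add_distrib, ← Finset.mul_sum, Matrix.mul_add,
      Matrix.add_mul, Matrix.mul_smul, Matrix.smul_mul] <;>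
    module


lemma browU_interp (Y₁ Y₂ Qhalf : Matrix (Fin n) (Fin n) ℝ)
    (S : Fin N → Finset (Fin N)) (q : Fin N → Fin N → ℕ)
    (C : ∀ i j : Fin N, Matrix (Fin (q i j)) (Fin n) ℝ)
    (qd : Fin N → ℕ) (C0 : ∀ i : Fin N, Matrix (Fin (qd i)) (Fin n) ℝ)
    (qu : Fin N → ℕ) (Cu : ∀ i : Fin N, Matrix (Fin (qu i)) (Fin n) ℝ)
    (d dbar : Fin N → Bool) (γ : ℝ) (i : Fin N) :
    BrowU n N (γ • Y₁ + (1 - γ) • Y₂) Qhalf S q C qd C0 qu Cu d dbar i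
      = γ • BrowU n N Y₁ Qhalf S q C qd C0 qu Cu d dbar i
        + (1 - γ) • BrowU n N Y₂ Qhalf S q C qd C0 qu Cu d dbar i := by
  ext a b
  rcases b with b | b | b | b | b <;>
    simp [BrowU, Matrix.add_mul, Matrix.smul_mul]

lemma phi_interp (S : Fin N → Finset (Fin N)) (q : Fin N → Fin N → ℕ)
    (ν₁ ν₂ : Fin N → Fin N → ℝ) (γ : ℝ) (i : Fin N) :
    Phi N S q (fun i j => harmonicInterp γ (ν₁ i j) (ν₂ i j)) i
      = γ • Phi N S q ν₁ i + (1 - γ) • Phi N S q ν₂ i := by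
  simp only [Phi, ← blockDiagonal'_smul, ← blockDiagonal'_add]
  congr 1
  funext j
  simp only [Pi.add_apply, Pi.smul_apply, inv_harmonicInterp]
  module

lemma omega_interp (S : Fin N → Finset (Fin N)) (q : Fin N → Fin N → ℕ)
    (μ₁ μ₂ : Fin N → Fin N → ℝ) (γ : ℝ) (i : Fin N) :
    Omega N S q (fun i j => harmonicInterp γ (μ₁ i j) (μ₂ i j)) i
      = γ • Omega N S q μ₁ i + (1 - γ) • Omega N S q μ₂ i := by
  simp only [Omega, ← blockDiagonal'_smul, ← blockDiagonal'_add]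
  congr 1
  funext r
  simp only [Pi.add_apply, Pi.smul_apply, inv_harmonicInterp]
  module

lemma dblkU_interp (S : Fin N → Finset (Fin N)) (q : Fin N → Fin N → ℕ) (qd qu : Fin N → ℕ)
    (ν₁ μ₁ ν₂ μ₂ : Fin N → Fin N → ℝ) (ν0₁ μ0₁ ν0₂ μ0₂ : Fin N → ℝ)
    (d dbar : Fin N → Bool) (γ : ℝ) (i : Fin N) :
    DblkU n N S q qd qu
        (fun i j => harmonicInterp γ (ν₁ i j) (ν₂ i j))
        (fun i j => harmonicInterp γ (μ₁ i j) (μ₂ i j))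
        (fun i => harmonicInterp γ (ν0₁ i) (ν0₂ i))
        (fun i => harmonicInterp γ (μ0₁ i) (μ0₂ i)) d dbar i
      = γ • DblkU n N S q qd qu ν₁ μ₁ ν0₁ μ0₁ d dbar i
        + (1 - γ) • DblkU n N S q qd qu ν₂ μ₂ ν0₂ μ0₂ d dbar i := by
  simp only [DblkU, phi_interp, omega_interp, fromBlocks_smul, fromBlocks_add, fromBlocks_inj,
    smul_zero, add_zero, mul_inv, inv_harmonicInterp, true_and]
  and_intros <;> module

lemma upsMat_interp (Aρ Y₁ Y₂ Qhalf : Matrix (Fin n) (Fin n) ℝ)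
    (B₁ : Matrix (Fin n) (Fin p) ℝ) (B₂ : Matrix (Fin n) (Fin m) ℝ)
    (R : Matrix (Fin p) (Fin p) ℝ) (S : Fin N → Finset (Fin N))
    (q : Fin N → Fin N → ℕ) (C : ∀ i j : Fin N, Matrix (Fin (q i j)) (Fin n) ℝ)
    (qd : Fin N → ℕ) (C0 : ∀ i : Fin N, Matrix (Fin (qd i)) (Fin n) ℝ)
    (qu : Fin N → ℕ) (Cu : ∀ i : Fin N, Matrix (Fin (qu i)) (Fin n) ℝ)
    (ν₁ μ₁ ν₂ μ₂ : Fin N → Fin N → ℝ) (ν0₁ μ0₁ ν0₂ μ0₂ : Fin N → ℝ)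
    (d dbar : Fin N → Bool) (γ : ℝ) (i : Fin N) :
    UpsMat n p m N Aρ (γ • Y₁ + (1 - γ) • Y₂) Qhalf B₁ B₂ R S q C qd C0 qu Cu
        (fun i j => harmonicInterp γ (ν₁ i j) (ν₂ i j))
        (fun i j => harmonicInterp γ (μ₁ i j) (μ₂ i j))
        (fun i => harmonicInterp γ (ν0₁ i) (ν0₂ i))
        (fun i => harmonicInterp γ (μ0₁ i) (μ0₂ i)) d dbar i
      = γ • UpsMat n p m N Aρ Y₁ Qhalf B₁ B₂ R S q C qd C0 qu Cu ν₁ μ₁ ν0₁ μ0₁ d dbar i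
        + (1 - γ) • UpsMat n p m N Aρ Y₂ Qhalf B₁ B₂ R S q C qd C0 qu Cu ν₂ μ₂ ν0₂ μ0₂
            d dbar i := by
  simp only [UpsMat, zmatU_interp, browU_interp, dblkU_interp, transpose_add,
    transpose_smul, fromBlocks_smul, fromBlocks_add]

theorem interpolation_preserves_LMI (Aρ Qhalf : Matrix (Fin n) (Fin n) ℝ)
    (B₁ : Matrix (Fin n) (Fin p) ℝ) (B₂ : Matrix (Fin n) (Fin m) ℝ)
    (R : Matrix (Fin p) (Fin p) ℝ)
    (S : Fin N → Finset (Fin N)) (q : Fin N → Fin N → ℕ)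
    (C : ∀ i j : Fin N, Matrix (Fin (q i j)) (Fin n) ℝ)
    (qd : Fin N → ℕ) (C0 : ∀ i : Fin N, Matrix (Fin (qd i)) (Fin n) ℝ)
    (qu : Fin N → ℕ) (Cu : ∀ i : Fin N, Matrix (Fin (qu i)) (Fin n) ℝ)
    (d dbar : Fin N → Bool)
    (Y₁ Y₂ : Matrix (Fin n) (Fin n) ℝ)
    (ν₁ μ₁ ν₂ μ₂ : Fin N → Fin N → ℝ) (ν0₁ μ0₁ ν0₂ μ0₂ : Fin N → ℝ)
    (hLMI₁ : ∀ i, NegDef (UpsMat n p m N Aρ Y₁ Qhalf B₁ B₂ R S q C qd C0 qu Cu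
      ν₁ μ₁ ν0₁ μ0₁ d dbar i))
    (hLMI₂ : ∀ i, NegDef (UpsMat n p m N Aρ Y₂ Qhalf B₁ B₂ R S q C qd C0 qu Cu
      ν₂ μ₂ ν0₂ μ0₂ d dbar i)) :
    ∀ γ ∈ Set.Icc (0 : ℝ) 1, ∀ i,
      NegDef (UpsMat n p m N Aρ (γ • Y₁ + (1 - γ) • Y₂) Qhalf B₁ B₂ R S q C qd C0 qu Cu
        (fun i j => (γ * (ν₁ i j)⁻¹ + (1 - γ) * (ν₂ i j)⁻¹)⁻¹)
        (fun i j => (γ * (μ₁ i j)⁻¹ + (1 - γ) * (μ₂ i j)⁻¹)⁻¹)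
        (fun i => (γ * (ν0₁ i)⁻¹ + (1 - γ) * (ν0₂ i)⁻¹)⁻¹)
        (fun i => (γ * (μ0₁ i)⁻¹ + (1 - γ) * (μ0₂ i)⁻¹)⁻¹) d dbar i) := by
  intro γ hγ i
  have h := (hLMI₁ i).convexComb (hLMI₂ i) hγ.1 hγ.2
  rwa [← upsMat_interp] at h

end LFT
end

section
/- Control-cost identity and bound for the consensus protocol. Under Assumption 1, let ϑ = (L₀^c + G)⁻¹𝟙_N, Θ = diag(ϑ), σ = ½ λ_min(Θ⁻¹(L₀^c+G) + (L₀^c+G)'Θ⁻¹), λ̂ = λ_max((L₀^c+G)'Θ⁻²(L₀^c+G)), and let Y = Y' > 0, R = R' > 0, B₁ ∈ ℝ^{n×p}. For states x₀, x₁, …, x_N ∈ ℝⁿ set e_i = x₀ − x_i and e = (e₁',…,e_N')', and let u_i = −K_i( Σ_{j∈S_i^c}(x_j − x_i) + g_i(x₀ − x_i) ) with K_i = −(ϑ_i σ)⁻¹ R⁻¹ B₁' Y⁻¹. Then Σ_{i=1}^{N} u_i' R u_i = e'( ((L₀^c+G)'Θ⁻²(L₀^c+G)) ⊗ (σ⁻²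 Y⁻¹ B₁ R⁻¹ B₁' Y⁻¹) )e, and consequently Σ_{i=1}^{N} u_i' R u_i ≤ (λ̂/σ²) Σ_{i=1}^{N} e_i' Y⁻¹ B₁ R⁻¹ B₁' Y⁻¹ e_i. -/
open Matrix BigOperators Kronecker

/-- Real adjacency matrix (`Adj i j = true` iff follower `i` receives information
from follower `j`). -/
def adjMat (N : ℕ) (Adj : Fin N → Fin N → Bool) : Matrix (Fin N) (Fin N) ℝ :=
  Matrix.of fun i j => if Adj i j then 1 else 0

/-- The Laplacian `L₀^c = diag(A₀^c 𝟙_N) − A₀^c`. -/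
def lap (N : ℕ) (Adj : Fin N → Fin N → Bool) : Matrix (Fin N) (Fin N) ℝ :=
  Matrix.diagonal (fun i => ∑ j, adjMat N Adj i j) - adjMat N Adj

/-- The pinning matrix `G = diag(g)`. -/
def pin (N : ℕ) (g : Fin N → Bool) : Matrix (Fin N) (Fin N) ℝ :=
  Matrix.diagonal fun i => if g i then 1 else 0

/-- Reachability along directed edges (edge from `a` to `b` iff `Adj b a = true`). -/
def Reach (N : ℕ) (Adj : Fin N → Fin N → Bool) (r i : Fin N) : Prop :=
  Relation.ReflTransGen (fun a b => Adj b a = true) r i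

/-- Assumption 1: the communication subgraph contains a spanning tree whose root
is a pinned node. -/
def PinnedSpanningTree (N : ℕ) (Adj : Fin N → Fin N → Bool) (g : Fin N → Bool) : Prop :=
  ∃ r, g r = true ∧ ∀ i, Reach N Adj r i

/-- `ϑ = (L₀^c + G)⁻¹ 𝟙_N`. -/
noncomputable def thetaVec (N : ℕ) (Adj : Fin N → Fin N → Bool) (g : Fin N → Bool) :
    Fin N → ℝ :=
  ((lap N Adj + pin N g)⁻¹).mulVec fun _ => 1

/-- Smallest eigenvalue of a (symmetric) real matrix. -/
noncomputable def lamMin {ι : Type*} [Fintype ι] (M : Matrix ι ι ℝ) : ℝ :=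
  sInf {r : ℝ | ∃ x : ι → ℝ, x ≠ 0 ∧ M.mulVec x = r • x}

/-- Largest eigenvalue of a (symmetric) real matrix. -/
noncomputable def lamMax {ι : Type*} [Fintype ι] (M : Matrix ι ι ℝ) : ℝ :=
  sSup {r : ℝ | ∃ x : ι → ℝ, x ≠ 0 ∧ M.mulVec x = r • x}

/-- `σ = ½ λ_min(Θ⁻¹(L₀^c+G) + (L₀^c+G)'Θ⁻¹)`. -/
noncomputable def sigmaConst (N : ℕ) (Adj : Fin N → Fin N → Bool) (g : Fin N → Bool) : ℝ :=
  (1 / 2) * lamMin ((Matrix.diagonal (thetaVec N Adj g))⁻¹ * (lap N Adj + pin N g)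
    + (lap N Adj + pin N g)ᵀ * (Matrix.diagonal (thetaVec N Adj g))⁻¹)

/-- `λ̂ = λ_max((L₀^c+G)'Θ⁻²(L₀^c+G))`. -/
noncomputable def lamHatConst (N : ℕ) (Adj : Fin N → Fin N → Bool) (g : Fin N → Bool) : ℝ :=
  lamMax ((lap N Adj + pin N g)ᵀ * (Matrix.diagonal (thetaVec N Adj g))⁻¹
    * (Matrix.diagonal (thetaVec N Adj g))⁻¹ * (lap N Adj + pin N g))

/-
The protocol input of follower `i` is the `i`-th block row of `(L₀ᶜ + G) ⊗ I` applied to the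
stacked error, `ζᵢ = Σⱼ (L₀ᶜ + G)ᵢⱼ eⱼ`, so `uᵢ = (ϑᵢσ)⁻¹ F ζᵢ` with `F = R⁻¹B₁'Y⁻¹`. Since
`F'RF = P := Y⁻¹B₁R⁻¹B₁'Y⁻¹`, the cost is `σ⁻² Σᵢ ϑᵢ⁻² ζᵢ'Pζᵢ`, which is the quadratic form of
`((L₀ᶜ+G)'Θ⁻²(L₀ᶜ+G)) ⊗ σ⁻²P`. The bound holds because `λ̂ I − (L₀ᶜ+G)'Θ⁻²(L₀ᶜ+G)` and `P` are
positive semidefinite, hence so is their Kronecker product. Assumption 1 enters through a maximum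
principle along the spanning tree: it makes `L₀ᶜ + G` nonsingular and gives `ϑ ≥ 1`, so that
`Θ⁻¹ = diag(ϑᵢ⁻¹)`.
-/

namespace Matrix
variable {ι κ : Type*} [Fintype ι] [Fintype κ]

section CommSemiring
variable {α : Type*} [CommSemiring α]

theorem dotProduct_kronecker_mulVec (M : Matrix ι ι α) (Q : Matrix κ κ α) (e : ι → κ → α) :
    (fun ik : ι × κ => e ik.1 ik.2) ⬝ᵥ (M ⊗ₖ Q) *ᵥ (fun ik : ι × κ => e ik.1 ik.2)
      = ∑ i, ∑ j, M i j * (e i ⬝ᵥ Q *ᵥ e j) := by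
  simp only [dotProduct, mulVec, Fintype.sum_prod_type, kroneckerMap_apply, Finset.mul_sum]
  refine Finset.sum_congr rfl fun i _ => ?_
  rw [Finset.sum_comm]
  refine Finset.sum_congr rfl fun j _ => Finset.sum_congr rfl fun k _ =>
    Finset.sum_congr rfl fun l _ => by ring

theorem sum_smul_dotProduct_mulVec_sum_smul (Q : Matrix κ κ α) (c c' : ι → α) (e : ι → κ → α) :
    (∑ i, c i • e i) ⬝ᵥ Q *ᵥ (∑ j, c' j • e j) = ∑ i, ∑ j, c i * c' j * (e i ⬝ᵥ Q *ᵥ e j) := by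
  simp only [sum_dotProduct, dotProduct_sum, mulVec_sum, mulVec_smul, smul_dotProduct,
    dotProduct_smul, smul_eq_mul, Finset.mul_sum]
  rw [Finset.sum_comm]
  refine Finset.sum_congr rfl fun i _ => Finset.sum_congr rfl fun j _ => by ring

theorem dotProduct_transpose_mul_diagonal_mul_kronecker_mulVec [DecidableEq ι] (A : Matrix ι ι α)
    (d : ι → α) (Q : Matrix κ κ α) (e : ι → κ → α) :
    (fun ik : ι × κ => e ik.1 ik.2) ⬝ᵥ ((Aᵀ * diagonal d * A) ⊗ₖ Q) *ᵥ
        (fun ik : ι × κ => e ik.1 ik.2)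
      = ∑ a, d a * ((∑ j, A a j • e j) ⬝ᵥ Q *ᵥ (∑ j, A a j • e j)) := by
  have entry : ∀ i j, (Aᵀ * diagonal d * A) i j = ∑ a, d a * (A a i * A a j) := fun i j => by
    rw [mul_apply]
    simp only [mul_diagonal, transpose_apply]
    exact Finset.sum_congr rfl fun a _ => by ring
  rw [dotProduct_kronecker_mulVec]
  simp only [entry, sum_smul_dotProduct_mulVec_sum_smul, Finset.sum_mul, Finset.mul_sum,
    mul_assoc]
  exact (Finset.sum_congr rfl fun i _ => Finset.sum_comm).trans Finset.sum_comm

theorem mulVec_dotProduct_mulVec_mulVec (F : Matrix ι κ α) (Q : Matrix ι ι α) (v : κ → α) :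
    F *ᵥ v ⬝ᵥ Q *ᵥ (F *ᵥ v) = v ⬝ᵥ (Fᵀ * Q * F) *ᵥ v := by
  rw [← mulVec_mulVec, ← mulVec_mulVec, dotProduct_mulVec v Fᵀ, vecMul_transpose]

end CommSemiring

variable [DecidableEq ι]

theorem isHermitian_transpose_mul_diagonal_mul (A : Matrix ι ι ℝ) (d : ι → ℝ) :
    (Aᵀ * diagonal d * A).IsHermitian := by
  rw [← conjTranspose_eq_transpose_of_trivial]
  exact isHermitian_conjTranspose_mul_mul A (isHermitian_diagonal d)

theorem inv_diagonal_of_ne_zero {K : Type*} [Field K] {v : ι → K} (hv : ∀ i, v i ≠ 0) :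
    (diagonal v)⁻¹ = diagonal fun i => (v i)⁻¹ := by
  refine inv_eq_right_inv ?_
  rw [diagonal_mul_diagonal, ← diagonal_one]
  exact congrArg diagonal <| funext fun i => mul_inv_cancel₀ (hv i)

theorem IsHermitian.eigenvalues_le_lamMax {M : Matrix ι ι ℝ} (hM : M.IsHermitian) (t : ι) :
    hM.eigenvalues t ≤ lamMax M := by
  refine le_csSup ((Set.finite_range hM.eigenvalues).bddAbove.mono ?_) ?_
  · rintro r ⟨x, hx, hMx⟩
    rw [← hM.spectrum_real_eq_range_eigenvalues, ← spectrum_toLin',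
      ← Module.End.hasEigenvalue_iff_mem_spectrum]
    exact Module.End.hasEigenvalue_of_hasEigenvector ⟨Module.End.mem_eigenspace_iff.mpr hMx, hx⟩
  · exact ⟨(hM.eigenvectorBasis t).ofLp, by simpa using hM.eigenvectorBasis.orthonormal.ne_zero t,
      by simpa using hM.mulVec_eigenvectorBasis t⟩

open scoped MatrixOrder in
theorem IsHermitian.posSemidef_lamMax_smul_one_sub {M : Matrix ι ι ℝ} (hM : M.IsHermitian) :
    (lamMax M • 1 - M).PosSemidef := by
  rw [← Algebra.algebraMap_eq_smul_one, ← Matrix.le_iff]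
  refine le_algebraMap_of_spectrum_le (fun r hr => ?_) hM.isSelfAdjoint
  obtain ⟨t, rfl⟩ := hM.spectrum_real_eq_range_eigenvalues ▸ hr
  exact hM.eigenvalues_le_lamMax t

theorem IsHermitian.dotProduct_kronecker_mulVec_le {M : Matrix ι ι ℝ} (hM : M.IsHermitian)
    {P : Matrix κ κ ℝ} (hP : P.PosSemidef) (e : ι → κ → ℝ) :
    (fun ik : ι × κ => e ik.1 ik.2) ⬝ᵥ (M ⊗ₖ P) *ᵥ (fun ik : ι × κ => e ik.1 ik.2)
      ≤ lamMax M * ∑ i, e i ⬝ᵥ P *ᵥ e i := by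
  have hnonneg := (hM.posSemidef_lamMax_smul_one_sub.kronecker hP).dotProduct_mulVec_nonneg
    (fun ik : ι × κ => e ik.1 ik.2)
  rw [star_trivial, dotProduct_kronecker_mulVec] at hnonneg
  simp only [sub_apply, smul_apply, one_apply, smul_eq_mul, mul_ite, mul_one, mul_zero, sub_mul,
    ite_mul, zero_mul, Finset.sum_sub_distrib, Finset.sum_ite_eq, Finset.mem_univ, if_true,
    ← Finset.mul_sum] at hnonneg
  rw [dotProduct_kronecker_mulVec]
  linarith

variable [DecidableEq κ] {Y : Matrix κ κ ℝ} {R : Matrix ι ι ℝ}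

theorem PosDef.transpose_gain_mul_mul_gain (hY : Y.IsHermitian) (hR : R.PosDef)
    (B : Matrix κ ι ℝ) :
    (R⁻¹ * Bᵀ * Y⁻¹)ᵀ * R * (R⁻¹ * Bᵀ * Y⁻¹) = Y⁻¹ * B * R⁻¹ * Bᵀ * Y⁻¹ := by
  have hYt : (Y⁻¹)ᵀ = Y⁻¹ := by simpa using hY.inv.eq
  have hRt : (R⁻¹)ᵀ = R⁻¹ := by simpa using hR.isHermitian.inv.eq
  simp only [transpose_mul, transpose_transpose, hYt, hRt, Matrix.mul_assoc,
    nonsing_inv_mul_cancel_left _ _ ((isUnit_iff_isUnit_det R).mp hR.isUnit)]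

theorem PosDef.posSemidef_gain_cost (hY : Y.IsHermitian) (hR : R.PosDef) (B : Matrix κ ι ℝ) :
    (Y⁻¹ * B * R⁻¹ * Bᵀ * Y⁻¹).PosSemidef := by
  rw [← hR.transpose_gain_mul_mul_gain hY B, ← conjTranspose_eq_transpose_of_trivial]
  exact hR.posSemidef.conjTranspose_mul_mul_same _

end Matrix

section Pinned
variable {N : ℕ} {Adj : Fin N → Fin N → Bool} {g : Fin N → Bool}

theorem sum_lap_add_pin_smul {M : Type*} [AddCommGroup M] [Module ℝ M] (e : Fin N → M)
    (i : Fin N) :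
    ∑ j, (lap N Adj + pin N g) i j • e j
      = ∑ j ∈ Finset.univ.filter fun j => Adj i j, (e i - e j)
        + (if g i then (1 : ℝ) else 0) • e i := by
  simp only [lap, pin, adjMat, Matrix.add_apply, Matrix.sub_apply, diagonal_apply, of_apply,
    add_smul, sub_smul, ite_smul, zero_smul, one_smul, Finset.sum_add_distrib,
    Finset.sum_sub_distrib, Finset.sum_ite_eq, Finset.mem_univ, if_true, Finset.sum_smul,
    Finset.sum_filter]

theorem protocol_input_eq_sum_lap_add_pin_smul {M : Type*} [AddCommGroup M] [Module ℝ M]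
    (x₀ : M) (x : Fin N → M) (i : Fin N) :
    (∑ j ∈ Finset.univ.filter fun j => Adj i j, (x j - x i))
        + (if g i then (1 : ℝ) else 0) • (x₀ - x i)
      = ∑ j, (lap N Adj + pin N g) i j • (x₀ - x j) := by
  simp only [sum_lap_add_pin_smul, sub_sub_sub_cancel_left]

theorem lap_add_pin_mulVec_apply (v : Fin N → ℝ) (i : Fin N) :
    ((lap N Adj + pin N g) *ᵥ v) i
      = ∑ j ∈ Finset.univ.filter fun j => Adj i j, (v i - v j)
        + (if g i then (1 : ℝ) else 0) * v i :=
  sum_lap_add_pin_smul v i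

theorem lap_add_pin_maximum_principle {v : Fin N → ℝ} {i : Fin N} (hmax : ∀ j, v j ≤ v i)
    (hpos : 0 < v i) (hrow : ((lap N Adj + pin N g) *ᵥ v) i = 0) :
    g i = false ∧ ∀ j, Adj i j = true → v j = v i := by
  rw [lap_add_pin_mulVec_apply] at hrow
  have hdiff : ∀ j ∈ Finset.univ.filter fun j => Adj i j, 0 ≤ v i - v j :=
    fun j _ => sub_nonneg.mpr (hmax j)
  obtain ⟨hsum, hpin⟩ := (add_eq_zero_iff_of_nonneg (Finset.sum_nonneg hdiff)
    (by positivity)).mp hrow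
  refine ⟨by simpa [hpos.ne'] using hpin, fun j hj => ?_⟩
  have := (Finset.sum_eq_zero_iff_of_nonneg hdiff).mp hsum j (by simpa using hj)
  linarith

theorem eq_zero_of_lap_add_pin_mulVec_eq_zero (hPin : PinnedSpanningTree N Adj g)
    {v : Fin N → ℝ} (hv : (lap N Adj + pin N g) *ᵥ v = 0) : v = 0 := by
  obtain ⟨r, hr, hreach⟩ := hPin
  suffices nonpos : ∀ w : Fin N → ℝ, (lap N Adj + pin N g) *ᵥ w = 0 → ∀ i, w i ≤ 0 by
    funext i
    have := nonpos (-v) (by rw [mulVec_neg, hv, neg_zero]) i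
    exact le_antisymm (nonpos v hv i) (by simpa using this)
  intro w hw i
  by_contra! hi
  obtain ⟨m, -, hm⟩ := Finset.exists_max_image Finset.univ w ⟨i, Finset.mem_univ i⟩
  have hmpos : 0 < w m := hi.trans_le (hm i (Finset.mem_univ i))
  have hmax : ∀ k, w k = w m → g k = false ∧ ∀ j, Adj k j = true → w j = w m := fun k hk => by
    simpa [hk] using lap_add_pin_maximum_principle (fun j => hk ▸ hm j (Finset.mem_univ j))
      (hk ▸ hmpos) (congrFun hw k)
  have hroot : w r = w m := by
    suffices ∀ k, Reach N Adj r k → w k = w m → w r = w m from this m (hreach m) rfl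
    intro k hk
    induction hk with
    | refl => exact id
    | tail _ hadj ih => exact fun hc => ih ((hmax _ hc).2 _ hadj)
  simpa [hr] using (hmax r hroot).1

theorem isUnit_det_lap_add_pin (hPin : PinnedSpanningTree N Adj g) :
    IsUnit (lap N Adj + pin N g).det := by
  refine isUnit_iff_ne_zero.mpr fun hdet => ?_
  obtain ⟨v, hv0, hv⟩ := exists_mulVec_eq_zero_iff.mpr hdet
  exact hv0 (eq_zero_of_lap_add_pin_mulVec_eq_zero hPin hv)

theorem lap_add_pin_mulVec_thetaVec (hPin : PinnedSpanningTree N Adj g) :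
    (lap N Adj + pin N g) *ᵥ thetaVec N Adj g = fun _ => 1 := by
  rw [thetaVec, mulVec_mulVec, mul_nonsing_inv _ (isUnit_det_lap_add_pin hPin), one_mulVec]

theorem one_le_thetaVec (hPin : PinnedSpanningTree N Adj g) (i : Fin N) :
    1 ≤ thetaVec N Adj g i := by
  set θ := thetaVec N Adj g
  obtain ⟨m, -, hm⟩ := Finset.exists_min_image Finset.univ θ ⟨i, Finset.mem_univ i⟩
  have hrow := congrFun (lap_add_pin_mulVec_thetaVec hPin) m
  rw [lap_add_pin_mulVec_apply] at hrow
  have hdiff : ∑ j ∈ Finset.univ.filter fun j => Adj m j, (θ m - θ j) ≤ 0 :=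
    Finset.sum_nonpos fun j _ => sub_nonpos.mpr (hm j (Finset.mem_univ j))
  have hi := hm i (Finset.mem_univ i)
  cases hg : g m
  · simp only [hg, Bool.false_eq_true, if_false] at hrow
    linarith
  · simp only [hg, if_true] at hrow
    linarith

end Pinned

theorem consensus_control_cost_general (N n p : ℕ)
    (Adj : Fin N → Fin N → Bool)
    (g : Fin N → Bool) (hPin : PinnedSpanningTree N Adj g)
    (Y : Matrix (Fin n) (Fin n) ℝ) (hY : Y.PosDef)
    (R : Matrix (Fin p) (Fin p) ℝ) (hR : R.PosDef)
    (B₁ : Matrix (Fin n) (Fin p) ℝ)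
    (x₀ : Fin n → ℝ) (x : Fin N → Fin n → ℝ)
    (u : Fin N → Fin p → ℝ)
    (hu : ∀ i, u i = -((-((thetaVec N Adj g i * sigmaConst N Adj g)⁻¹ •
        (R⁻¹ * B₁ᵀ * Y⁻¹))).mulVec
        ((∑ j ∈ Finset.univ.filter fun j => Adj i j, (x j - x i))
          + (if g i then (1 : ℝ) else 0) • (x₀ - x i)))) :
    (∑ i, u i ⬝ᵥ R.mulVec (u i))
      = (fun ik : Fin N × Fin n => (x₀ - x ik.1) ik.2) ⬝ᵥ
          ((((lap N Adj + pin N g)ᵀ * (Matrix.diagonal (thetaVec N Adj g))⁻¹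
              * (Matrix.diagonal (thetaVec N Adj g))⁻¹ * (lap N Adj + pin N g)) ⊗ₖ
            (((sigmaConst N Adj g) ^ 2)⁻¹ • (Y⁻¹ * B₁ * R⁻¹ * B₁ᵀ * Y⁻¹))).mulVec
            fun ik : Fin N × Fin n => (x₀ - x ik.1) ik.2)
    ∧ (∑ i, u i ⬝ᵥ R.mulVec (u i))
        ≤ (lamHatConst N Adj g / (sigmaConst N Adj g) ^ 2) *
            ∑ i, (x₀ - x i) ⬝ᵥ (Y⁻¹ * B₁ * R⁻¹ * B₁ᵀ * Y⁻¹).mulVec (x₀ - x i) := by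
  set A := lap N Adj + pin N g
  set θ := thetaVec N Adj g
  set σ := sigmaConst N Adj g
  set P := Y⁻¹ * B₁ * R⁻¹ * B₁ᵀ * Y⁻¹
  have hM : Aᵀ * (diagonal θ)⁻¹ * (diagonal θ)⁻¹ * A
      = Aᵀ * diagonal (fun a => (θ a)⁻¹ * (θ a)⁻¹) * A := by
    rw [Matrix.mul_assoc Aᵀ, inv_diagonal_of_ne_zero fun a =>
      (one_pos.trans_le (one_le_thetaVec hPin a)).ne', diagonal_mul_diagonal]
  have identity : ∑ i, u i ⬝ᵥ R *ᵥ u i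
      = (fun ik : Fin N × Fin n => (x₀ - x ik.1) ik.2) ⬝ᵥ
          ((Aᵀ * (diagonal θ)⁻¹ * (diagonal θ)⁻¹ * A) ⊗ₖ ((σ ^ 2)⁻¹ • P)) *ᵥ
            fun ik : Fin N × Fin n => (x₀ - x ik.1) ik.2 := by
    rw [hM, kronecker_smul, smul_mulVec, dotProduct_smul,
      dotProduct_transpose_mul_diagonal_mul_kronecker_mulVec _ _ _ fun i => x₀ - x i,
      smul_eq_mul, Finset.mul_sum]
    refine Finset.sum_congr rfl fun i _ => ?_
    rw [hu i, neg_mulVec, neg_neg, protocol_input_eq_sum_lap_add_pin_smul, smul_mulVec,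
      mulVec_smul, smul_dotProduct, dotProduct_smul, mulVec_dotProduct_mulVec_mulVec,
      hR.transpose_gain_mul_mul_gain hY.1, smul_eq_mul, smul_eq_mul, mul_inv]
    ring
  refine ⟨identity, ?_⟩
  rw [identity, kronecker_smul, smul_mulVec, dotProduct_smul, smul_eq_mul, lamHatConst,
    div_eq_inv_mul, mul_assoc (σ ^ 2)⁻¹, hM]
  exact mul_le_mul_of_nonneg_left
    ((isHermitian_transpose_mul_diagonal_mul A _).dotProduct_kronecker_mulVec_le
      (hR.posSemidef_gain_cost hY.1 B₁) fun i => x₀ - x i) (by positivity)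

/-- **Control-cost identity and bound for the consensus protocol.**
Under Assumption 1, with `e_i = x₀ − x_i` and
`u_i = −K_i(Σ_{j∈Sᵢᶜ}(x_j − x_i) + g_i(x₀ − x_i))`, `K_i = −(ϑ_i σ)⁻¹R⁻¹B₁'Y⁻¹`:
`Σᵢ uᵢ'Ruᵢ = e'(((L₀^c+G)'Θ⁻²(L₀^c+G)) ⊗ (σ⁻²Y⁻¹B₁R⁻¹B₁'Y⁻¹))e`, and consequently
`Σᵢ uᵢ'Ruᵢ ≤ (λ̂/σ²) Σᵢ eᵢ'Y⁻¹B₁R⁻¹B₁'Y⁻¹eᵢ`. -/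
theorem consensus_control_cost (N n p : ℕ)
    (Adj : Fin N → Fin N → Bool) (hloop : ∀ i, Adj i i = false)
    (g : Fin N → Bool) (hPin : PinnedSpanningTree N Adj g)
    (Y : Matrix (Fin n) (Fin n) ℝ) (hY : Y.PosDef)
    (R : Matrix (Fin p) (Fin p) ℝ) (hR : R.PosDef)
    (B₁ : Matrix (Fin n) (Fin p) ℝ)
    (x₀ : Fin n → ℝ) (x : Fin N → Fin n → ℝ)
    (u : Fin N → Fin p → ℝ)
    (hu : ∀ i, u i = -((-((thetaVec N Adj g i * sigmaConst N Adj g)⁻¹ •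
        (R⁻¹ * B₁ᵀ * Y⁻¹))).mulVec
        ((∑ j ∈ Finset.univ.filter fun j => Adj i j, (x j - x i))
          + (if g i then (1 : ℝ) else 0) • (x₀ - x i)))) :
    (∑ i, u i ⬝ᵥ R.mulVec (u i))
      = (fun ik : Fin N × Fin n => (x₀ - x ik.1) ik.2) ⬝ᵥ
          ((((lap N Adj + pin N g)ᵀ * (Matrix.diagonal (thetaVec N Adj g))⁻¹
              * (Matrix.diagonal (thetaVec N Adj g))⁻¹ * (lap N Adj + pin N g)) ⊗ₖ
            (((sigmaConst N Adj g) ^ 2)⁻¹ • (Y⁻¹ * B₁ * R⁻¹ * B₁ᵀ * Y⁻¹))).mulVec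
            fun ik : Fin N × Fin n => (x₀ - x ik.1) ik.2)
    ∧ (∑ i, u i ⬝ᵥ R.mulVec (u i))
        ≤ (lamHatConst N Adj g / (sigmaConst N Adj g) ^ 2) *
            ∑ i, (x₀ - x i) ⬝ᵥ (Y⁻¹ * B₁ * R⁻¹ * B₁ᵀ * Y⁻¹).mulVec (x₀ - x i) :=
  consensus_control_cost_general N n p Adj g hPin Y hY R hR B₁ x₀ x u hu
end
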